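/- arXiv:2011.02465 — 4 statements merged into one kernel-verified Lean document; each statement's English description precedes it below -/
import Mathlib

section
/- Let U be an N×N unitary complex matrix and x a nonzero complex number. Then det(1 − x·U) = (−x)^N · det(U) · conj( det(1 − (conj x)^{−1} · U) ). -/
open Matrix

theorem one_sub_smul_eq_neg_smul_mul_one_sub_inv_smul {K A : Type*} [Field K] [Ring A]
    [Algebra K A] {u v : A} (huv : u * v = 1) {x : K} (hx : x ≠ 0) :
    1 - x • u = (-x) • (u * (1 - x⁻¹ • v)) := by
  rw [mul_sub, mul_one, mul_smul_comm, huv, smul_sub, smul_smul, neg_mul, mul_inv_cancel₀ hx]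
  simp only [neg_smul, one_smul]
  abel

theorem Matrix.det_one_sub_smul_of_mul_eq_one {n K : Type*} [Fintype n] [DecidableEq n] [Field K]
    {U V : Matrix n n K} (hUV : U * V = 1) {x : K} (hx : x ≠ 0) :
    (1 - x • U).det = (-x) ^ Fintype.card n * U.det * (1 - x⁻¹ • V).det := by
  rw [one_sub_smul_eq_neg_smul_mul_one_sub_inv_smul hUV hx, det_smul, det_mul, mul_assoc]

theorem Matrix.star_det_one_sub_smul {n K : Type*} [Fintype n] [DecidableEq n] [CommRing K]
    [StarRing K] (A : Matrix n n K) (c : K) :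
    star (1 - c • A).det = (1 - star c • Aᴴ).det := by
  rw [← det_conjTranspose, conjTranspose_sub, conjTranspose_one, conjTranspose_smul]

/-- Functional equation of the characteristic polynomial of a unitary matrix:
`det(1 − x·U) = (−x)^N · det U · conj( det(1 − (conj x)⁻¹ · U) )`. -/
theorem unitary_charpoly_functional_equation
    (N : ℕ) (U : Matrix (Fin N) (Fin N) ℂ) (hU : U * Uᴴ = 1) (x : ℂ) (hx : x ≠ 0) :
    (1 - x • U).det
      = (-x) ^ N * U.det * (starRingEnd ℂ) ((1 - ((starRingEnd ℂ) x)⁻¹ • U).det) := by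
  rw [det_one_sub_smul_of_mul_eq_one hU hx, Fintype.card_fin, starRingEnd_apply,
    star_det_one_sub_smul, star_inv₀, starRingEnd_apply, star_star]
end

section
/- Let x_1, …, x_k be pairwise distinct complex numbers with k ≥ 1, and let N be a natural number. Then h_N(x_1, …, x_k) = ∑_{j=1}^{k} x_j^{N + k − 1} · ∏_{m ≠ j} (x_j − x_m)^{−1}. -/
/-!
Write `R_M(x) = ∑_j x_j^M ∏_{m ≠ j} (x_j - x_m)⁻¹`. Multiplying the `j`-th term by `x_j - x_0`
kills the term `j = 0` and cancels a factor of every other term, so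
`R_{M+1}(x) = x_0 R_M(x) + R_M(x_1, …)`. The complete homogeneous polynomials obey the same
recurrence `h_{N+1}(x) = x_0 h_N(x) + h_{N+1}(x_1, …)`, and the two start from the same value
`h_0(x) = 1 = R_{k-1}(x)`, the latter being the coefficient of `X^{k-1}` in the Lagrange
interpolant of `X^{k-1}`. A double induction on `k` and `N` finishes the proof.
-/

open Finset

/-- The complete homogeneous symmetric polynomial of degree `n`. -/
def completeHomog {R : Type*} [CommSemiring R] (k n : ℕ) (x : Fin k → R) : R :=
  ∑ m ∈ Finset.Nat.antidiagonalTuple k n, ∏ i, x i ^ m i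

theorem Finset.Nat.sum_antidiagonalTuple_succ {M : Type*} [AddCommMonoid M] (k n : ℕ)
    (f : (Fin (k + 1) → ℕ) → M) :
    ∑ m ∈ antidiagonalTuple (k + 1) n, f m =
      ∑ p ∈ antidiagonal n, ∑ t ∈ antidiagonalTuple k p.2, f (Fin.cons p.1 t) := by
  change _ = (Multiset.map _ (List.Nat.antidiagonal n : Multiset (ℕ × ℕ))).sum
  simp only [Finset.sum, antidiagonalTuple, Multiset.Nat.antidiagonalTuple, Multiset.map_coe,
    Multiset.sum_coe, List.Nat.antidiagonalTuple, List.flatMap, List.map_flatten, List.sum_flatten,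
    List.map_map, Function.comp_def]

theorem Fin.prod_univ_erase_succ {M : Type*} [CommMonoid M] {k : ℕ} (f : Fin (k + 1) → M)
    (j : Fin k) :
    ∏ m ∈ univ.erase j.succ, f m = f 0 * ∏ m ∈ univ.erase j, f m.succ := by
  simp [← Finset.filter_ne', Finset.prod_filter, Fin.prod_univ_succ, (Fin.succ_ne_zero j).symm]

section CompleteHomog

variable {R : Type*} [CommSemiring R]

theorem completeHomog_zero_right (k : ℕ) (x : Fin k → R) : completeHomog k 0 x = 1 := by
  simp [completeHomog, Finset.Nat.antidiagonalTuple_zero_right]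

theorem completeHomog_succ (k n : ℕ) (x : Fin (k + 1) → R) :
    completeHomog (k + 1) n x =
      ∑ p ∈ antidiagonal n, x 0 ^ p.1 * completeHomog k p.2 (Fin.tail x) := by
  simp only [completeHomog, Finset.Nat.sum_antidiagonalTuple_succ, Fin.prod_univ_succ,
    Fin.cons_zero, Fin.cons_succ, Finset.mul_sum, Fin.tail]

theorem completeHomog_succ_succ (k n : ℕ) (x : Fin (k + 1) → R) :
    completeHomog (k + 1) (n + 1) x =
      x 0 * completeHomog (k + 1) n x + completeHomog k (n + 1) (Fin.tail x) := by
  rw [completeHomog_succ, Finset.Nat.sum_antidiagonal_succ, completeHomog_succ, Finset.mul_sum]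
  simp only [pow_zero, one_mul, pow_succ', mul_assoc]
  exact add_comm _ _

end CompleteHomog

section ResidueSum

variable {F : Type*} [Field F]

def residueSum {k : ℕ} (x : Fin k → F) (M : ℕ) : F :=
  ∑ j, x j ^ M * ∏ m ∈ univ.erase j, (x j - x m)⁻¹

theorem residueSum_eq_one {k : ℕ} {x : Fin (k + 1) → F} (hx : Function.Injective x) :
    residueSum x k = 1 := by
  have h := Lagrange.coeff_eq_sum (s := univ) hx.injOn (P := Polynomial.X ^ k)
    (by
      rw [Polynomial.degree_X_pow, card_univ, Fintype.card_fin]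
      exact_mod_cast k.lt_succ_self)
  simp only [card_univ, Fintype.card_fin, add_tsub_cancel_right, Polynomial.coeff_X_pow_self,
    Polynomial.eval_pow, Polynomial.eval_X] at h
  simp [residueSum, h, div_eq_mul_inv, prod_inv_distrib]

theorem residueSum_succ {k : ℕ} {x : Fin (k + 1) → F} (hx : ∀ j : Fin k, x j.succ ≠ x 0)
    (M : ℕ) :
    residueSum x (M + 1) = x 0 * residueSum x M + residueSum (Fin.tail x) M := by
  calc residueSum x (M + 1)
      = ∑ j, x 0 * (x j ^ M * ∏ m ∈ univ.erase j, (x j - x m)⁻¹)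
          + ∑ j, (x j - x 0) * (x j ^ M * ∏ m ∈ univ.erase j, (x j - x m)⁻¹) := by
        rw [← sum_add_distrib]
        exact sum_congr rfl fun j _ => by ring
    _ = x 0 * residueSum x M + residueSum (Fin.tail x) M := by
        rw [← mul_sum]
        congr 1
        rw [Fin.sum_univ_succ, sub_self, zero_mul, zero_add]
        refine sum_congr rfl fun j _ => ?_
        rw [Fin.prod_univ_erase_succ (fun m => (x j.succ - x m)⁻¹)]
        field_simp [sub_ne_zero.2 (hx j)]
        rfl

theorem completeHomog_eq_residueSum_of_tail {k : ℕ} {x : Fin (k + 1) → F}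
    (hx : Function.Injective x)
    (htail : ∀ n, completeHomog k (n + 1) (Fin.tail x) = residueSum (Fin.tail x) (n + k))
    (n : ℕ) : completeHomog (k + 1) n x = residueSum x (n + k) := by
  induction n with
  | zero => rw [completeHomog_zero_right, zero_add, residueSum_eq_one hx]
  | succ n ih =>
    rw [completeHomog_succ_succ, ih, htail, Nat.add_right_comm,
      residueSum_succ fun j h => Fin.succ_ne_zero j (hx h)]

theorem completeHomog_eq_residueSum {k : ℕ} {x : Fin (k + 1) → F} (hx : Function.Injective x)
    (n : ℕ) : completeHomog (k + 1) n x = residueSum x (n + k) := by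
  induction k generalizing n with
  | zero =>
    refine completeHomog_eq_residueSum_of_tail hx (fun m => ?_) n
    simp [completeHomog, residueSum]
  | succ k ih =>
    refine completeHomog_eq_residueSum_of_tail hx (fun m => ?_) n
    rw [ih (x := Fin.tail x) (hx.comp (Fin.succ_injective _))]
    congr 1
    omega

end ResidueSum

/-- Partial-fraction (residue) expansion:
for pairwise distinct `x_1,…,x_k` (`k ≥ 1`),
`h_N(x) = ∑_j x_j^{N+k−1} ∏_{m≠j} (x_j − x_m)⁻¹`. -/
theorem completeHomog_eq_residue_sum (k : ℕ) (hk : 1 ≤ k) (x : Fin k → ℂ)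
    (hinj : Function.Injective x) (N : ℕ) :
    completeHomog k N x
      = ∑ j, x j ^ (N + k - 1) * ∏ m ∈ Finset.univ.erase j, (x j - x m)⁻¹ := by
  obtain ⟨k, rfl⟩ := Nat.exists_eq_add_of_le' hk
  exact completeHomog_eq_residueSum hinj N
end

section
/- Let x_1, …, x_k be pairwise distinct nonzero complex numbers (k ≥ 1), let y_1, …, y_m be complex numbers, and let N be a natural number with N > m − k. Then the coefficient of t^N in the formal power series (∏_{r=1}^{m} (1 − t y_r)) · (∏_{i=1}^{k} (1 − t x_i))^{−1} equals ∑_{j=1}^{k} x_j^N · ( ∏_{r=1}^{m} (1 − y_r / x_j) ) / ( ∏_{i ≠ j} (1 − x_i / x_j) ). -/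
/-!
Partial fractions. Put `D(t) = ∏ᵢ (1 - xᵢ t)` and `P(t) = ∏ᵣ (1 - yᵣ t)`. The remainder of `P`
modulo `D` has degree `< k` and agrees with `P` at the roots `1 / xⱼ` of `D`, so it is the
Lagrange interpolant at these nodes, which is `∑ⱼ Aⱼ ∏_{i ≠ j} (1 - xᵢ t)` with
`Aⱼ = P(1 / xⱼ) / ∏_{i ≠ j} (1 - xᵢ / xⱼ)`. Hence `P / D = Q + ∑ⱼ Aⱼ / (1 - xⱼ t)` for the
polynomial quotient `Q`, whose degree `deg P - k ≤ m - k` is below `N`; so the coefficient of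
`t ^ N` is `∑ⱼ Aⱼ xⱼ ^ N`.
-/

open Finset PowerSeries

theorem PowerSeries.mk_pow_mul_one_sub_C_mul_X {R : Type*} [CommRing R] (a : R) :
    mk (a ^ ·) * (1 - C a * X) = 1 := by
  simpa [rescale_mk, rescale_X] using congrArg (rescale a) (mk_one_mul_one_sub_eq_one (S := R))

namespace Polynomial

section CommRing

variable {R ι : Type*} [CommRing R]

theorem coe_prod_one_sub_C_mul_X (s : Finset ι) (x : ι → R) :
    ((∏ i ∈ s, (1 - C (x i) * X) : R[X]) : R⟦X⟧) =
      ∏ i ∈ s, (1 - PowerSeries.C (x i) * PowerSeries.X) := by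
  rw [← coeToPowerSeries.ringHom_apply, map_prod]
  simp

theorem degree_one_sub_C_mul_X {a : R} (ha : a ≠ 0) : (1 - C a * X).degree = 1 := by
  compute_degree!

theorem degree_prod_one_sub_C_mul_X_le (s : Finset ι) (x : ι → R) :
    (∏ i ∈ s, (1 - C (x i) * X) : R[X]).degree ≤ #s := by
  refine (degree_prod_le _ _).trans ((sum_le_card_nsmul _ _ 1 fun i _ => ?_).trans (by simp))
  compute_degree

theorem degree_prod_one_sub_C_mul_X [IsDomain R] {s : Finset ι} {x : ι → R}
    (hx : ∀ i ∈ s, x i ≠ 0) : (∏ i ∈ s, (1 - C (x i) * X) : R[X]).degree = #s := by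
  rw [degree_prod, sum_congr rfl fun i hi => degree_one_sub_C_mul_X (hx i hi)]
  simp

end CommRing

section Field

open Lagrange

variable {F ι : Type*} [Field F]

theorem coeff_div_eq_zero_of_degree_lt {p q : F[X]} {N : ℕ} (hq : q ≠ 0)
    (hp : p.degree < N + q.degree) : (p / q).coeff N = 0 := by
  by_cases hpq : q.degree ≤ p.degree
  · refine coeff_eq_zero_of_degree_lt ?_
    rw [← degree_add_div hq hpq, degree_eq_natDegree hq, add_comm] at hp
    exact (WithBot.add_lt_add_iff_right WithBot.coe_ne_bot).mp hp
  · rw [(Polynomial.div_eq_zero_iff hq).mpr (not_le.mp hpq), coeff_zero]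

theorem _root_.Lagrange.basisDivisor_inv_inv (a : F) {b : F} (hb : b ≠ 0) :
    basisDivisor a⁻¹ b⁻¹ = C (1 - b / a)⁻¹ * (1 - C b * X) := by
  have hlin : (1 - C b * X : F[X]) = C (-b) * (X - C b⁻¹) := by
    rw [mul_sub, ← C_mul, neg_mul, mul_inv_cancel₀ hb, map_neg, map_neg, C_1]
    ring
  rw [basisDivisor, hlin, ← mul_assoc, ← C_mul]
  congr 2
  rcases eq_or_ne a 0 with rfl | ha
  · simp
  · rw [inv_sub_inv ha hb, one_sub_div ha, inv_div, inv_div, ← neg_sub a b, div_neg]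
    ring

theorem _root_.Lagrange.basis_inv [DecidableEq ι] {s : Finset ι} {x : ι → F}
    (hx : ∀ i ∈ s, x i ≠ 0) (j : ι) :
    Lagrange.basis s (fun i => (x i)⁻¹) j =
      (C (∏ i ∈ s.erase j, (1 - x i / x j))⁻¹ * ∏ i ∈ s.erase j, (1 - C (x i) * X)) := by
  rw [Lagrange.basis,
    prod_congr rfl fun i hi => basisDivisor_inv_inv (x j) (hx i (mem_of_mem_erase hi)),
    prod_mul_distrib, ← map_prod, prod_inv_distrib]

theorem _root_.Lagrange.mod_eq_interpolate [DecidableEq ι] {s : Finset ι} {v : ι → F}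
    (hvs : Set.InjOn v s) {D : F[X]} (hD : D.degree = #s) (hroot : ∀ i ∈ s, D.eval (v i) = 0)
    (P : F[X]) : P % D = interpolate s v fun i => P.eval (v i) := by
  have hD0 : D ≠ 0 := by
    rintro rfl
    simp at hD
  refine eq_interpolate_of_eval_eq _ hvs (hD ▸ degree_mod_lt P hD0) fun i hi => ?_
  conv_rhs => rw [← EuclideanDomain.div_add_mod P D]
  simp [hroot i hi]

theorem eq_prod_one_sub_C_mul_X_mul_div_add_sum [DecidableEq ι] {s : Finset ι} {x : ι → F}
    (hx0 : ∀ i ∈ s, x i ≠ 0) (hinj : Set.InjOn x s) (P : F[X]) :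
    P = (∏ i ∈ s, (1 - C (x i) * X)) * (P / ∏ i ∈ s, (1 - C (x i) * X)) +
      ∑ j ∈ s, C (P.eval (x j)⁻¹ / ∏ i ∈ s.erase j, (1 - x i / x j)) *
        ∏ i ∈ s.erase j, (1 - C (x i) * X) := by
  have hroot : ∀ j ∈ s, (∏ i ∈ s, (1 - C (x i) * X)).eval (x j)⁻¹ = 0 := fun j hj => by
    rw [eval_prod]
    exact prod_eq_zero hj (by simp [hx0 j hj])
  conv_lhs => rw [← EuclideanDomain.div_add_mod P (∏ i ∈ s, (1 - C (x i) * X)),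
    mod_eq_interpolate (v := fun i => (x i)⁻¹) (inv_injective.comp_injOn hinj)
      (degree_prod_one_sub_C_mul_X hx0) hroot,
    interpolate_apply]
  congr 1
  refine sum_congr rfl fun j hj => ?_
  rw [basis_inv hx0, ← mul_assoc, ← C_mul, div_eq_mul_inv]

theorem coeff_mul_inv_prod_one_sub_C_mul_X [DecidableEq ι] {s : Finset ι} {x : ι → F}
    (hx0 : ∀ i ∈ s, x i ≠ 0) (hinj : Set.InjOn x s) (P : F[X]) {N : ℕ}
    (hP : P.degree < N + #s) :
    PowerSeries.coeff N ((P : F⟦X⟧) * (∏ i ∈ s, (1 - PowerSeries.C (x i) * PowerSeries.X))⁻¹) =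
      ∑ j ∈ s, x j ^ N * P.eval (x j)⁻¹ / ∏ i ∈ s.erase j, (1 - x i / x j) := by
  rw [← coe_prod_one_sub_C_mul_X]
  set D : F[X] := ∏ i ∈ s, (1 - C (x i) * X) with hD
  have hDdeg : D.degree = #s := degree_prod_one_sub_C_mul_X hx0
  have hquot : (P / D).coeff N = 0 :=
    coeff_div_eq_zero_of_degree_lt (by rintro h; simp [h] at hDdeg) (by rwa [hDdeg])
  have hgeom (j : ι) (hj : j ∈ s) : (D : F⟦X⟧) * mk (x j ^ ·) =
      ∏ i ∈ s.erase j, (1 - PowerSeries.C (x i) * PowerSeries.X) := by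
    rw [hD, coe_prod_one_sub_C_mul_X, ← mul_prod_erase s _ hj, mul_right_comm,
      mul_comm (1 - _), mk_pow_mul_one_sub_C_mul_X, one_mul]
  have hsplit : (P : F⟦X⟧) = D * ((P / D : F[X]) + ∑ j ∈ s, PowerSeries.C
      (P.eval (x j)⁻¹ / ∏ i ∈ s.erase j, (1 - x i / x j)) * mk (x j ^ ·)) := by
    conv_lhs => rw [eq_prod_one_sub_C_mul_X_mul_div_add_sum hx0 hinj P, ← hD]
    rw [← coeToPowerSeries.ringHom_apply]
    simp only [map_add, map_sum, map_mul, coeToPowerSeries.ringHom_apply, coe_C,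
      coe_prod_one_sub_C_mul_X]
    rw [mul_add, mul_sum]
    congr 1
    exact sum_congr rfl fun j hj => by rw [mul_left_comm, hgeom j hj]
  have hunit : PowerSeries.constantCoeff (D : F⟦X⟧) ≠ 0 := by
    simp [hD, coe_prod_one_sub_C_mul_X, map_prod]
  rw [hsplit, mul_comm, ← mul_assoc, PowerSeries.inv_mul_cancel _ hunit, one_mul, map_add,
    coeff_coe, hquot, zero_add, map_sum]
  refine sum_congr rfl fun j _ => ?_
  rw [PowerSeries.coeff_C_mul, coeff_mk]
  ring

end Field

end Polynomial

theorem supersym_completeHomog_residue_sum_general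
    (k m N : ℕ) (x : Fin k → ℂ) (y : Fin m → ℂ)
    (hx0 : ∀ i, x i ≠ 0) (hinj : Function.Injective x)
    (hN : (m : ℤ) - (k : ℤ) < (N : ℤ)) :
    PowerSeries.coeff (R := ℂ) N
        ((∏ r, (1 - PowerSeries.C (R := ℂ) (y r) * PowerSeries.X)) *
          (∏ i, (1 - PowerSeries.C (R := ℂ) (x i) * PowerSeries.X))⁻¹)
      = ∑ j, x j ^ N * (∏ r, (1 - y r / x j)) /
          ∏ i ∈ Finset.univ.erase j, (1 - x i / x j) := by
  have hdeg : (∏ r, (1 - Polynomial.C (y r) * Polynomial.X) : Polynomial ℂ).degree <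
      N + #(univ : Finset (Fin k)) := by
    refine (Polynomial.degree_prod_one_sub_C_mul_X_le _ _).trans_lt ?_
    rw [card_univ, Fintype.card_fin, card_univ, Fintype.card_fin]
    exact_mod_cast (by omega : m < N + k)
  rw [← Polynomial.coe_prod_one_sub_C_mul_X,
    Polynomial.coeff_mul_inv_prod_one_sub_C_mul_X (fun i _ => hx0 i) hinj.injOn _ hdeg]
  refine sum_congr rfl fun j _ => ?_
  simp [Polynomial.eval_prod, div_eq_mul_inv]

/-- Residue-sum expression for the supersymmetric complete homogeneous function
`h_N[X − Y]`: for pairwise distinct nonzero `x_1,…,x_k`, complex `y_1,…,y_m`, and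
`N > m − k`, the coefficient of `t^N` in
`(∏_r (1 − t y_r)) · (∏_i (1 − t x_i))⁻¹` equals
`∑_j x_j^N · (∏_r (1 − y_r/x_j)) / (∏_{i≠j} (1 − x_i/x_j))`. -/
theorem supersym_completeHomog_residue_sum
    (k m N : ℕ) (hk : 1 ≤ k) (x : Fin k → ℂ) (y : Fin m → ℂ)
    (hx0 : ∀ i, x i ≠ 0) (hinj : Function.Injective x)
    (hN : (m : ℤ) - (k : ℤ) < (N : ℤ)) :
    PowerSeries.coeff (R := ℂ) N
        ((∏ r, (1 - PowerSeries.C (R := ℂ) (y r) * PowerSeries.X)) *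
          (∏ i, (1 - PowerSeries.C (R := ℂ) (x i) * PowerSeries.X))⁻¹)
      = ∑ j, x j ^ N * (∏ r, (1 - y r / x j)) /
          ∏ i ∈ Finset.univ.erase j, (1 - x i / x j) :=
  supersym_completeHomog_residue_sum_general k m N x y hx0 hinj hN
end

section
/- Let E_1, …, E_k be i.i.d. random variables with the exponential distribution of rate 1 on [0,∞). Then for all real numbers x_1, …, x_k and every natural number n, E[ ( ∑_{j=1}^{k} x_j E_j )^n ] = n! · h_n(x_1, …, x_k), where h_n is the complete homogeneous symmetric polynomial of degree n. -/
/-!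
Independence identifies the joint law of `(E_1, …, E_k)` with the `k`-fold product of the
exponential law, whose moments are `∫ t ^ m = Γ(m + 1) = m!`. Expanding the `n`-th power by the
multinomial theorem, Fubini turns the moment of each monomial `∏ (x_j t_j) ^ m_j` into
`∏ x_j ^ m_j * m_j!`, and the multinomial coefficient `n! / ∏ m_j!` cancels the factorials.
-/

open MeasureTheory ProbabilityTheory Finset

lemma Nat.multinomial_mul_prod_factorial_of_mem_piAntidiag {ι : Type*} [DecidableEq ι]
    {s : Finset ι} {n : ℕ} {m : ι → ℕ} (hm : m ∈ piAntidiag s n) :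
    Nat.multinomial s m * ∏ i ∈ s, (m i).factorial = n.factorial := by
  rw [mul_comm, Nat.multinomial_spec, (mem_piAntidiag.1 hm).1]

theorem MeasureTheory.integral_pi_pow_sum_mul {ι : Type*} [Fintype ι] [DecidableEq ι]
    (ν : Measure ℝ) [SigmaFinite ν] (hν : ∀ m : ℕ, Integrable (fun t => t ^ m) ν)
    (x : ι → ℝ) (n : ℕ) :
    ∫ t, (∑ j, x j * t j) ^ n ∂Measure.pi (fun _ => ν)
      = ∑ m ∈ piAntidiag univ n,
          Nat.multinomial univ m * ∏ i, x i ^ m i * ∫ s, s ^ m i ∂ν := by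
  simp_rw [sum_pow_eq_sum_piAntidiag, mul_pow]
  rw [integral_finsetSum _ fun m _ => ((Integrable.fintype_prod fun i =>
    ((hν (m i)).const_mul (x i ^ m i))).const_mul _)]
  refine sum_congr rfl fun m _ => ?_
  rw [integral_const_mul,
    integral_fintype_prod_eq_prod (fun i (s : ℝ) => x i ^ m i * s ^ m i)]
  simp_rw [integral_const_mul]

namespace ProbabilityTheory

lemma expMeasure_eq_withDensity (r : ℝ) :
    expMeasure r = volume.withDensity
      fun t => ENNReal.ofReal (if 0 ≤ t then r * Real.exp (-(r * t)) else 0) := by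
  change volume.withDensity (exponentialPDF r) = _
  exact congrArg _ (funext (exponentialPDF_eq r))

lemma expMeasure_eq_withDensity_restrict_Ioi (r : ℝ) :
    expMeasure r = (volume.restrict (Set.Ioi 0)).withDensity
      fun t => ENNReal.ofReal (r * Real.exp (-(r * t))) := by
  rw [expMeasure_eq_withDensity, Measure.restrict_congr_set Ioi_ae_eq_Ici,
    ← withDensity_indicator measurableSet_Ici]
  congr 1
  ext t
  by_cases ht : 0 ≤ t <;> simp [ht]

lemma withDensity_exp_neg_eq_expMeasure_one :
    volume.withDensity (fun t => ENNReal.ofReal (if 0 ≤ t then Real.exp (-t) else 0))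
      = expMeasure 1 := by
  simp [expMeasure_eq_withDensity]

lemma integral_expMeasure {r : ℝ} (hr : 0 < r) (g : ℝ → ℝ) :
    ∫ t, g t ∂expMeasure r = ∫ t in Set.Ioi 0, r * Real.exp (-(r * t)) * g t := by
  rw [expMeasure_eq_withDensity_restrict_Ioi, integral_withDensity_eq_integral_toReal_smul
    (by fun_prop) (.of_forall fun _ => ENNReal.ofReal_lt_top)]
  refine setIntegral_congr_fun measurableSet_Ioi fun t _ => ?_
  rw [ENNReal.toReal_ofReal (by positivity), smul_eq_mul]

lemma integral_pow_expMeasure {r : ℝ} (hr : 0 < r) (m : ℕ) :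
    ∫ t, t ^ m ∂expMeasure r = m.factorial / r ^ m := by
  have hpow : ∀ t ∈ Set.Ioi (0 : ℝ), r * Real.exp (-(r * t)) * t ^ m
      = r * (t ^ (((m + 1 : ℕ) : ℝ) - 1) * Real.exp (-(r * t))) := fun t _ => by
    rw [Nat.cast_succ, add_sub_cancel_right, Real.rpow_natCast]
    ring
  rw [integral_expMeasure hr, setIntegral_congr_fun measurableSet_Ioi hpow, integral_const_mul,
    Real.integral_rpow_mul_exp_neg_mul_Ioi (by positivity) hr, Real.rpow_natCast,
    Nat.cast_succ, Real.Gamma_nat_eq_factorial, one_div, inv_pow, pow_succ]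
  field_simp

lemma integrable_pow_expMeasure {r : ℝ} (hr : 0 < r) (m : ℕ) :
    Integrable (fun t => t ^ m) (expMeasure r) :=
  .of_integral_ne_zero <| by rw [integral_pow_expMeasure hr]; positivity

end ProbabilityTheory

theorem moment_weighted_exponential_sum_eq_completeHomog_general
    {Ω : Type*} [MeasurableSpace Ω] (μ : Measure Ω) [IsProbabilityMeasure μ]
    (k : ℕ) (E : Fin k → Ω → ℝ)
    (hindep : iIndepFun E μ)
    (hdist : ∀ i, μ.map (E i)
      = volume.withDensity fun t => ENNReal.ofReal (if 0 ≤ t then Real.exp (-t) else 0))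
    (x : Fin k → ℝ) (n : ℕ) :
    ∫ ω, (∑ j, x j * E j ω) ^ n ∂μ = (n.factorial : ℝ) * completeHomog k n x := by
  have hlaw (i : Fin k) : μ.map (E i) = expMeasure 1 :=
    (hdist i).trans withDensity_exp_neg_eq_expMeasure_one
  have := isProbabilityMeasure_expMeasure one_pos
  have hE (i : Fin k) : AEMeasurable (E i) μ :=
    .of_map_ne_zero <| hlaw i ▸ IsProbabilityMeasure.ne_zero _
  have hjoint : μ.map (fun ω i => E i ω) = Measure.pi fun _ => expMeasure 1 := by
    rw [(iIndepFun_iff_map_fun_eq_pi_map hE).1 hindep]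
    simp_rw [hlaw]
  calc ∫ ω, (∑ j, x j * E j ω) ^ n ∂μ
      = ∫ t, (∑ j, x j * t j) ^ n ∂Measure.pi fun _ => expMeasure 1 := by
        rw [← hjoint, integral_map (aemeasurable_pi_lambda _ hE)
          (Continuous.aestronglyMeasurable (by fun_prop))]
    _ = ∑ m ∈ piAntidiag univ n,
          Nat.multinomial univ m * ∏ i, x i ^ m i * ∫ s, s ^ m i ∂expMeasure 1 :=
        integral_pi_pow_sum_mul _ (integrable_pow_expMeasure one_pos) x n
    _ = ∑ m ∈ piAntidiag univ n, (n.factorial : ℝ) * ∏ i, x i ^ m i := by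
        refine sum_congr rfl fun m hm => ?_
        simp_rw [integral_pow_expMeasure one_pos, one_pow, div_one, prod_mul_distrib,
          ← Nat.multinomial_mul_prod_factorial_of_mem_piAntidiag hm]
        push_cast
        ring
    _ = n.factorial * completeHomog k n x := by
        rw [← mul_sum, completeHomog, piAntidiag_univ_fin_eq_antidiagonalTuple]

/-- If `E_1, …, E_k` are i.i.d. rate-one exponential random variables, then
`E[(∑_j x_j E_j)^n] = n! · h_n(x_1, …, x_k)`. -/
theorem moment_weighted_exponential_sum_eq_completeHomog
    {Ω : Type*} [MeasurableSpace Ω] (μ : Measure Ω) [IsProbabilityMeasure μ]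
    (k : ℕ) (E : Fin k → Ω → ℝ)
    (hmeas : ∀ i, Measurable (E i))
    (hindep : iIndepFun E μ)
    (hdist : ∀ i, μ.map (E i)
      = volume.withDensity fun t => ENNReal.ofReal (if 0 ≤ t then Real.exp (-t) else 0))
    (x : Fin k → ℝ) (n : ℕ) :
    ∫ ω, (∑ j, x j * E j ω) ^ n ∂μ = (n.factorial : ℝ) * completeHomog k n x :=
  moment_weighted_exponential_sum_eq_completeHomog_general μ k E hindep hdist x n
end
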